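/- arXiv:1301.5841 — 9 statements merged into one kernel-verified Lean document; each statement's English description precedes it below -/
import Mathlib

section
/- Every pseudo-injective module is automorphism-invariant: if M is a module such that for every submodule A of M each monomorphism A → M extends to an endomorphism of M, then M is invariant under all automorphisms of its injective hull. -/
/-!
Let `σ` be an automorphism of `E ⊇ M`. On the submodule `A` of those `x` with `σ x ∈ M`, `σ` restricts
to a monomorphism `A → M`; pseudo-injectivity extends it to `f : M → M`. The image of `σ - f` on `M`
meets `M` trivially: if `σ x - f x ∈ M` then `σ x ∈ M`, so `x ∈ A` and `σ x = f x`. Since `M` is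
essential in `E`, `σ = f` on `M`, hence `σ M ⊆ M`.
-/

universe u v w

section Defs

variable {R : Type u} [Ring R]

/-- `N` is an essential submodule of `M`. -/
def EssentialSub {M : Type v} [AddCommGroup M] [Module R M] (N : Submodule R M) : Prop :=
  ∀ K : Submodule R M, K ⊓ N = ⊥ → K = ⊥

/-- `N` is essential in `P` (both submodules of `M`, `N ≤ P`). -/
def EssentialIn {M : Type v} [AddCommGroup M] [Module R M] (N P : Submodule R M) : Prop :=
  N ≤ P ∧ ∀ K : Submodule R M, K ≤ P → K ⊓ N = ⊥ → K = ⊥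

/-- `N` is a closed submodule of `M`: it has no proper essential extension in `M`. -/
def ClosedSub {M : Type v} [AddCommGroup M] [Module R M] (N : Submodule R M) : Prop :=
  ∀ P : Submodule R M, EssentialIn N P → N = P

/-- `i : M →ₗ[R] E` realizes `E` as an injective hull of `M`. -/
structure IsInjectiveHull {M : Type v} {E : Type w} [AddCommGroup M] [Module R M]
    [AddCommGroup E] [Module R E] (i : M →ₗ[R] E) : Prop where
  inj : Function.Injective i
  injE : Module.Injective R E
  ess : EssentialSub (LinearMap.range i)

/-- `M` is invariant under every automorphism of the hull `E` given by `i`. -/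
def HullAutInv {M : Type v} {E : Type w} [AddCommGroup M] [Module R M]
    [AddCommGroup E] [Module R E] (i : M →ₗ[R] E) : Prop :=
  ∀ g : E ≃ₗ[R] E, ∀ m : M, g (i m) ∈ LinearMap.range i

end Defs

/-- `M` is automorphism-invariant: invariant under all automorphisms of its injective hull. -/
def AutInvariant (R : Type u) [Ring R] (M : Type v) [AddCommGroup M] [Module R M] : Prop :=
  ∀ (E : Type v) [AddCommGroup E] [Module R E] (i : M →ₗ[R] E),
    IsInjectiveHull i → HullAutInv i

/-- Every monomorphism from a submodule of `M` into `M` extends to an endomorphism of `M`. -/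
def PseudoInjective (R : Type u) [Ring R] (M : Type v) [AddCommGroup M] [Module R M] : Prop :=
  ∀ (A : Submodule R M) (f : A →ₗ[R] M), Function.Injective f →
    ∃ g : M →ₗ[R] M, ∀ a : A, g a = f a

/-- Every homomorphism from a submodule of `M` into `M` extends to an endomorphism of `M`. -/
def QuasiInjective (R : Type u) [Ring R] (M : Type v) [AddCommGroup M] [Module R M] : Prop :=
  ∀ (A : Submodule R M) (f : A →ₗ[R] M), ∃ g : M →ₗ[R] M, ∀ a : A, g a = f a

/-- `X` is `Y`-injective. -/
def RelInjective (R : Type u) [Ring R] (X : Type v) (Y : Type w) [AddCommGroup X] [Module R X]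
    [AddCommGroup Y] [Module R Y] : Prop :=
  ∀ (A : Submodule R Y) (f : A →ₗ[R] X), ∃ g : Y →ₗ[R] X, ∀ a : A, g a = f a

/-- `M` contains no direct sum of two nonzero isomorphic submodules. -/
def SquareFreeMod (R : Type u) [Ring R] (M : Type v) [AddCommGroup M] [Module R M] : Prop :=
  ∀ (A B : Submodule R M), A ⊓ B = ⊥ → Nonempty (A ≃ₗ[R] B) → A = ⊥

/-- `X` and `Y` have no nonzero isomorphic submodules. -/
def OrthogonalMod (R : Type u) [Ring R] (X : Type v) (Y : Type w) [AddCommGroup X] [Module R X]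
    [AddCommGroup Y] [Module R Y] : Prop :=
  ∀ (A : Submodule R X) (B : Submodule R Y), Nonempty (A ≃ₗ[R] B) → A = ⊥

/-- No nonzero element of `M` is annihilated by an essential (right) ideal of `R`. -/
def NonsingularMod (R : Type u) [Ring R] (M : Type v) [AddCommGroup M] [Module R M] : Prop :=
  ∀ m : M, EssentialSub (LinearMap.ker (LinearMap.toSpanSingleton R M m)) → m = 0

section PseudoInjective

variable {R : Type u} [Ring R] {M : Type v} {E : Type w}
  [AddCommGroup M] [Module R M] [AddCommGroup E] [Module R E]

theorem LinearMap.eq_of_range_sub_inf_eq_bot {N : Submodule R E} (hN : EssentialSub N)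
    {u v : M →ₗ[R] E} (h : LinearMap.range (u - v) ⊓ N = ⊥) : u = v :=
  sub_eq_zero.mp (LinearMap.range_eq_bot.mp (hN _ h))

def partialConjDomain (i : M →ₗ[R] E) (σ : E →ₗ[R] E) : Submodule R M :=
  (LinearMap.range i).comap (σ ∘ₗ i)

section PartialConj

variable {i : M →ₗ[R] E} (hi : Function.Injective i) (σ : E →ₗ[R] E)

noncomputable def partialConj : partialConjDomain i σ →ₗ[R] M :=
  (LinearEquiv.ofInjective i hi).symm.toLinearMap ∘ₗ (σ ∘ₗ i).restrict fun _ hx => hx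

theorem apply_partialConj (a : partialConjDomain i σ) : i (partialConj hi σ a) = σ (i a) := by
  rw [← LinearEquiv.ofInjective_apply i (h := hi), partialConj, LinearMap.comp_apply,
    LinearEquiv.coe_coe, LinearEquiv.apply_symm_apply]
  rfl

theorem partialConj_injective (hσ : Function.Injective σ) : Function.Injective (partialConj hi σ) :=
  fun a b hab => Subtype.ext <| hi <| hσ <| by
    rw [← apply_partialConj hi σ a, ← apply_partialConj hi σ b, hab]

end PartialConj

theorem PseudoInjective.exists_comp_eq_comp {i : M →ₗ[R] E} (hi : Function.Injective i)
    (hess : EssentialSub (LinearMap.range i)) (hp : PseudoInjective R M) {σ : E →ₗ[R] E}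
    (hσ : Function.Injective σ) : ∃ f : M →ₗ[R] M, σ ∘ₗ i = i ∘ₗ f := by
  obtain ⟨f, hf⟩ := hp _ _ (partialConj_injective hi σ hσ)
  refine ⟨f, LinearMap.eq_of_range_sub_inf_eq_bot hess ?_⟩
  rw [Submodule.eq_bot_iff]
  rintro y ⟨⟨x, rfl⟩, m, hm⟩
  have hx : x ∈ partialConjDomain i σ := ⟨m + f x, by simp [hm]⟩
  have hσx : σ (i x) = i (f x) := by
    rw [hf ⟨x, hx⟩, apply_partialConj]
  simp [hσx]

end PseudoInjective

/-- every pseudo-injective module is automorphism-invariant. -/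
theorem pseudoInjective_implies_autInvariant {R : Type u} [Ring R]
    {M : Type v} {E : Type w} [AddCommGroup M] [Module R M] [AddCommGroup E] [Module R E]
    (i : M →ₗ[R] E) (hhull : IsInjectiveHull i)
    (hp : PseudoInjective R M) :
    HullAutInv i := by
  intro σ m
  obtain ⟨f, hf⟩ := hp.exists_comp_eq_comp hhull.inj hhull.ess σ.injective
  exact ⟨f m, (LinearMap.congr_fun hf m).symm⟩
end

section
/- A module M is automorphism-invariant if and only if every isomorphism between two essential submodules of M extends to an automorphism of M. -/
universe u v w

/-! An isomorphism `f : A ≃ B` between essential submodules extends, by injectivity of `E`, to an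
endomorphism `φ` of `E`. It is injective on the essential submodule `i A`, hence injective, and a
left inverse of `φ` is injective on the essential submodule `i B`, so `φ` is an automorphism;
automorphism-invariance restricts it to an automorphism of `M` extending `f`.

Conversely, an automorphism `g` of `E` induces an isomorphism between the essential submodules
`A = {x | g (i x) ∈ i M}` and `B = i⁻¹ (g (i A))`. If `G` extends it, then `k = g ∘ i - i ∘ G`
vanishes on `A`, and `k x ∈ i M` forces `x ∈ A`; so `range k` meets the essential `i M` trivially
and `k = 0`. -/

open LinearMap Submodule

variable {R : Type u} [Ring R] {M : Type v} {E : Type w}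
  [AddCommGroup M] [Module R M] [AddCommGroup E] [Module R E]

namespace EssentialSub

theorem comap {i : M →ₗ[R] E} (hi : Function.Injective i) {S : Submodule R E}
    (hS : EssentialSub S) : EssentialSub (S.comap i) := by
  intro K hK
  have hmap : K.map i ⊓ S = ⊥ := by
    rw [eq_bot_iff]
    rintro _ ⟨⟨x, hxK, rfl⟩, hxS⟩
    have hx : x ∈ K ⊓ S.comap i := ⟨hxK, hxS⟩
    rw [hK, mem_bot] at hx
    simp [hx]
  exact map_injective_of_injective hi (by rw [hS _ hmap, Submodule.map_bot])

theorem map {A : Submodule R M} (hA : EssentialSub A) {i : M →ₗ[R] E}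
    (hi : Function.Injective i) (hrange : EssentialSub (range i)) : EssentialSub (A.map i) := by
  intro K hK
  have hcomap : K.comap i ⊓ A = ⊥ := by
    rw [eq_bot_iff]
    rintro x ⟨hxK, hxA⟩
    have hix : i x ∈ K ⊓ A.map i := ⟨hxK, mem_map_of_mem hxA⟩
    rw [hK, mem_bot] at hix
    simpa using hi (hix.trans i.map_zero.symm)
  refine hrange K (eq_bot_iff.mpr ?_)
  rintro _ ⟨hxK, x, rfl⟩
  have hx : x ∈ K.comap i := hxK
  rw [hA _ hcomap, mem_bot] at hx
  simp [hx]

theorem map_equiv {F : Type*} [AddCommGroup F] [Module R F] (e : E ≃ₗ[R] F)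
    {S : Submodule R E} (hS : EssentialSub S) : EssentialSub (S.map (e : E →ₗ[R] F)) := by
  rw [map_equiv_eq_comap_symm]
  exact hS.comap e.symm.injective

theorem linearMap_eq_zero {X : Type*} [AddCommGroup X] [Module R X] {N : Submodule R E}
    (hN : EssentialSub N) (k : X →ₗ[R] E) (hk : ∀ x, k x ∈ N → k x = 0) : k = 0 := by
  have hrange : range k ⊓ N = ⊥ := by
    rw [eq_bot_iff]
    rintro _ ⟨⟨x, rfl⟩, hx⟩
    exact hk x hx
  ext x
  simpa [hN _ hrange] using mem_range_self k x

end EssentialSub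

namespace Module.Injective

variable [Module.Injective R E]

theorem exists_comp_eq {X : Type*} [AddCommGroup X] [Module R X] {F : Type w} [AddCommGroup F]
    [Module R F] {j : X →ₗ[R] F} (hj : Function.Injective j) (g : X →ₗ[R] E) :
    ∃ φ : F →ₗ[R] E, φ ∘ₗ j = g := by
  let e := LinearEquiv.ofInjective j hj
  obtain ⟨φ, hφ⟩ := Module.Injective.out (range j).subtype (range j).injective_subtype
    (g ∘ₗ e.symm.toLinearMap)
  refine ⟨φ, LinearMap.ext fun x => ?_⟩
  simpa [e] using hφ (e x)

theorem bijective_of_essentialSub_range {X : Type*} [AddCommGroup X] [Module R X]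
    {F : Type w} [AddCommGroup F] [Module R F] {j : X →ₗ[R] E} (φ : E →ₗ[R] F)
    (hj : EssentialSub (range j)) (hφj : Function.Injective (φ ∘ₗ j))
    (hφj' : EssentialSub (range (φ ∘ₗ j))) : Function.Bijective φ := by
  have hφ : Function.Injective φ := by
    refine ker_eq_bot.mp (hj _ (eq_bot_iff.mpr ?_))
    rintro _ ⟨hx, x, rfl⟩
    have hx0 : x = 0 := hφj (by simpa using hx)
    simp [hx0]
  obtain ⟨ρ, hρφ⟩ := exists_comp_eq hφ LinearMap.id
  have hρ : Function.Injective ρ := by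
    refine ker_eq_bot.mp (hφj' _ (eq_bot_iff.mpr ?_))
    rintro _ ⟨hx, x, rfl⟩
    have hjx : j x = 0 := by simpa [← LinearMap.comp_apply ρ φ, hρφ] using hx
    simp [hjx]
  refine ⟨hφ, fun y => ⟨ρ y, hρ ?_⟩⟩
  exact LinearMap.congr_fun hρφ (ρ y)

end Module.Injective

theorem LinearEquiv.exists_comp_eq_of_map_range_eq {X Y : Type*} [AddCommGroup X] [Module R X]
    [AddCommGroup Y] [Module R Y] {F : Type*} [AddCommGroup F] [Module R F]
    {i : X →ₗ[R] E} {j : Y →ₗ[R] F} (hi : Function.Injective i) (hj : Function.Injective j)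
    (g : E ≃ₗ[R] F) (h : (range i).map (g : E →ₗ[R] _) = range j) :
    ∃ f : X ≃ₗ[R] Y, ∀ x, j (f x) = g (i x) := by
  refine ⟨(LinearEquiv.ofInjective i hi).trans
    ((g.ofSubmodules _ _ h).trans (LinearEquiv.ofInjective j hj).symm), fun x => ?_⟩
  simp only [LinearEquiv.trans_apply, LinearEquiv.ofInjective_symm_apply,
    LinearEquiv.ofSubmodules_apply, LinearEquiv.ofInjective_apply]

theorem HullAutInv.map_range_eq {i : M →ₗ[R] E} (h : HullAutInv i) (g : E ≃ₗ[R] E) :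
    (range i).map (g : E →ₗ[R] _) = range i := by
  refine le_antisymm ?_ fun _ ⟨m, hm⟩ => ?_
  · rintro _ ⟨_, ⟨m, rfl⟩, rfl⟩
    exact h g m
  · obtain ⟨m', hm'⟩ := h g.symm m
    exact ⟨i m', ⟨m', rfl⟩, by simp [hm', hm]⟩

theorem HullAutInv.exists_linearEquiv_extends {i : M →ₗ[R] E} (hhull : IsInjectiveHull i)
    (hAut : HullAutInv i) {A B : Submodule R M} (hA : EssentialSub A) (hB : EssentialSub B)
    (f : A ≃ₗ[R] B) : ∃ G : M ≃ₗ[R] M, ∀ a : A, G a = f a := by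
  obtain ⟨hinj, hinjE, hess⟩ := hhull
  have hess_range {C : Submodule R M} (hC : EssentialSub C) :
      EssentialSub (range (i ∘ₗ C.subtype)) := by
    rw [range_comp, range_subtype]
    exact hC.map hinj hess
  obtain ⟨φ, hφ⟩ := hinjE.exists_comp_eq (j := i ∘ₗ A.subtype)
    (hinj.comp A.injective_subtype) (i ∘ₗ B.subtype ∘ₗ (f : A →ₗ[R] B))
  have hφ_bij := hinjE.bijective_of_essentialSub_range φ (hess_range hA)
    (by rw [hφ]; exact hinj.comp (B.injective_subtype.comp f.injective))
    (by rw [hφ, ← comp_assoc, range_comp_of_range_eq_top _ f.range]; exact hess_range hB)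
  obtain ⟨G, hG⟩ := (LinearEquiv.ofBijective φ hφ_bij).exists_comp_eq_of_map_range_eq hinj hinj
    (hAut.map_range_eq _)
  exact ⟨G, fun a => hinj ((hG a).trans (LinearMap.congr_fun hφ a))⟩

theorem hullAutInv_of_forall_essential_iso_extends {i : M →ₗ[R] E} (hinj : Function.Injective i)
    (hess : EssentialSub (range i))
    (H : ∀ (A B : Submodule R M), EssentialSub A → EssentialSub B →
      ∀ f : A ≃ₗ[R] B, ∃ G : M ≃ₗ[R] M, ∀ a : A, G a = f a) :
    HullAutInv i := by
  intro g
  set A := ((range i).comap (g : E →ₗ[R] E)).comap i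
  have hA : EssentialSub A := (hess.comap g.injective).comap hinj
  have hgA : (A.map i).map (g : E →ₗ[R] E) ≤ range i := by
    rintro _ ⟨_, ⟨a, ha, rfl⟩, rfl⟩
    exact ha
  set B := ((A.map i).map (g : E →ₗ[R] E)).comap i
  have hB : EssentialSub B := ((hA.map hinj hess).map_equiv g).comap hinj
  obtain ⟨f, hf⟩ := g.exists_comp_eq_of_map_range_eq (i := i ∘ₗ A.subtype) (j := i ∘ₗ B.subtype)
    (hinj.comp A.injective_subtype) (hinj.comp B.injective_subtype)
    (by rw [range_comp, range_subtype, range_comp, range_subtype, map_comap_eq_self hgA])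
  obtain ⟨G, hG⟩ := H A B hA hB f
  have hk : (g : E →ₗ[R] E) ∘ₗ i - i ∘ₗ G.toLinearMap = 0 := by
    refine hess.linearMap_eq_zero _ fun x ⟨y, hy⟩ => ?_
    have hxA : x ∈ A := ⟨y + G x, by simp [hy]⟩
    simpa [hG ⟨x, hxA⟩, sub_eq_zero] using (hf ⟨x, hxA⟩).symm
  intro m
  exact ⟨G m, (sub_eq_zero.mp (by simpa using LinearMap.congr_fun hk m)).symm⟩

/-- `M` is automorphism-invariant iff every isomorphism between two essential
submodules of `M` extends to an automorphism of `M`. -/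
theorem autInvariant_iff_essential_iso_extends {R : Type u} [Ring R]
    {M : Type v} {E : Type w} [AddCommGroup M] [Module R M] [AddCommGroup E] [Module R E]
    (i : M →ₗ[R] E) (hhull : IsInjectiveHull i) :
    HullAutInv i ↔
      ∀ (A B : Submodule R M), EssentialSub A → EssentialSub B →
        ∀ f : ↥A ≃ₗ[R] ↥B, ∃ g : M ≃ₗ[R] M, ∀ a : A, g ↑a = ↑(f a) :=
  ⟨fun hAut _ _ hA hB f => hAut.exists_linearEquiv_extends hhull hA hB f,
    hullAutInv_of_forall_essential_iso_extends hhull.inj hhull.ess⟩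
end

section
/- If M is an automorphism-invariant module whose injective hull decomposes as E(M) = E₁ ⊕ E₂ ⊕ E₃ with E₁ ≅ E₂, then M = (M ∩ E₁) ⊕ (M ∩ E₂) ⊕ (M ∩ E₃). -/
universe u v w

/-!
For `f` with `f ∘ f = 0` the map `1 + f` is an automorphism of `E(M)`, so automorphism-invariance
of `M` forces `f(M) ⊆ M`. With `π₁` the projection onto `E₁` and `φ : E₁ ≅ E₂`, both `φ ∘ π₁` and
`φ⁻¹ ∘ π₂` are square-zero, and composing them gives `π₁(M) ⊆ M`; symmetrically `π₂(M) ⊆ M`, and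
the `E₃`-component of `m ∈ M` is what remains of `m`.
-/

namespace Submodule

variable {R : Type*} [Ring R] {E : Type*} [AddCommGroup E] [Module R E]

theorem apply_mem_of_forall_linearEquiv_mem {M : Submodule R E}
    (hM : ∀ g : E ≃ₗ[R] E, ∀ m ∈ M, g m ∈ M) {f : Module.End R E} (hf : f * f = 0)
    {m : E} (hm : m ∈ M) : f m ∈ M := by
  let g := LinearMap.GeneralLinearGroup.generalLinearEquiv R E
    (IsNilpotent.isUnit_one_add ⟨2, by rw [sq, hf]⟩).unit
  have hg : g m = m + f m := rfl
  simpa [hg] using M.sub_mem (hM g m hm) hm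

variable {p q : Submodule R E}

theorem projection_add_of_mem (hpq : IsCompl p q) {x y : E} (hx : x ∈ p) (hy : y ∈ q) :
    p.projection q hpq (x + y) = x := by
  rw [map_add, projection_apply_of_mem_left hpq hx, projection_apply_of_mem_right hpq hy, add_zero]

theorem comp_projectionOnto_mul_self_eq_zero (hpq : IsCompl p q) {ψ : p →ₗ[R] E}
    (hψ : ∀ x, ψ x ∈ q) :
    (ψ ∘ₗ p.projectionOnto q hpq) * (ψ ∘ₗ p.projectionOnto q hpq) = 0 := by
  ext x
  simp [projectionOnto_apply_of_mem_right hpq (hψ _)]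

theorem projection_mem_of_forall_linearEquiv_mem {M p' q' : Submodule R E}
    (hM : ∀ g : E ≃ₗ[R] E, ∀ m ∈ M, g m ∈ M) (hpq : IsCompl p q) (hpq' : IsCompl p' q')
    (hp : p ≤ q') (hp' : p' ≤ q) (φ : p ≃ₗ[R] p') {m : E} (hm : m ∈ M) :
    p.projection q hpq m ∈ M := by
  have hφy : (φ (p.projectionOnto q hpq m) : E) ∈ M :=
    apply_mem_of_forall_linearEquiv_mem hM
      (comp_projectionOnto_mul_self_eq_zero hpq (ψ := p'.subtype ∘ₗ φ.toLinearMap)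
        fun x ↦ hp' (φ x).2) hm
  simpa using apply_mem_of_forall_linearEquiv_mem hM
    (comp_projectionOnto_mul_self_eq_zero hpq' (ψ := p.subtype ∘ₗ φ.symm.toLinearMap)
      fun x ↦ hp (φ.symm x).2) hφy

end Submodule

theorem autInvariant_decomposition_of_hull_general {R : Type u} [Ring R]
    {E : Type v} [AddCommGroup E] [Module R E]
    (M : Submodule R E)
    (hinv : ∀ g : E ≃ₗ[R] E, ∀ m ∈ M, g m ∈ M)
    (E₁ E₂ E₃ : Submodule R E)
    (hsup : E₁ ⊔ E₂ ⊔ E₃ = ⊤)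
    (hind1 : E₁ ⊓ (E₂ ⊔ E₃) = ⊥) (hind2 : E₂ ⊓ (E₁ ⊔ E₃) = ⊥)
    (hiso : Nonempty (↥E₁ ≃ₗ[R] ↥E₂)) :
    M = M ⊓ E₁ ⊔ M ⊓ E₂ ⊔ M ⊓ E₃ := by
  obtain ⟨φ⟩ := hiso
  have hc₁ : IsCompl E₁ (E₂ ⊔ E₃) :=
    ⟨disjoint_iff.2 hind1, codisjoint_iff.2 (by rwa [← sup_assoc])⟩
  have hc₂ : IsCompl E₂ (E₁ ⊔ E₃) :=
    ⟨disjoint_iff.2 hind2, codisjoint_iff.2 (by rwa [← sup_assoc, sup_comm E₂])⟩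
  refine le_antisymm (fun m hm ↦ ?_) (sup_le (sup_le inf_le_left inf_le_left) inf_le_left)
  have hm₀ : m ∈ E₁ ⊔ E₂ ⊔ E₃ := hsup ▸ Submodule.mem_top
  obtain ⟨ab, hab, c, hc, rfl⟩ := Submodule.mem_sup.1 hm₀
  obtain ⟨a, ha, b, hb, rfl⟩ := Submodule.mem_sup.1 hab
  have haM : a ∈ M := by
    have := Submodule.projection_mem_of_forall_linearEquiv_mem hinv hc₁ hc₂
      le_sup_left le_sup_left φ hm
    rwa [add_assoc, Submodule.projection_add_of_mem hc₁ ha (Submodule.add_mem_sup hb hc)] at this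
  have hbM : b ∈ M := by
    have := Submodule.projection_mem_of_forall_linearEquiv_mem hinv hc₂ hc₁
      le_sup_left le_sup_left φ.symm hm
    rwa [show a + b + c = b + (a + c) by abel,
      Submodule.projection_add_of_mem hc₂ hb (Submodule.add_mem_sup ha hc)] at this
  have hcM : c ∈ M := by
    convert M.sub_mem (M.sub_mem hm haM) hbM using 1
    abel
  exact Submodule.add_mem_sup (Submodule.add_mem_sup ⟨haM, ha⟩ ⟨hbM, hb⟩) ⟨hcM, hc⟩

/-- if `M` is automorphism-invariant with `E(M) = E₁ ⊕ E₂ ⊕ E₃`, `E₁ ≅ E₂`,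
then `M = (M ∩ E₁) ⊕ (M ∩ E₂) ⊕ (M ∩ E₃)`. -/
theorem autInvariant_decomposition_of_hull {R : Type u} [Ring R]
    {E : Type v} [AddCommGroup E] [Module R E]
    (hE : Module.Injective R E) (M : Submodule R E) (hess : EssentialSub M)
    (hinv : ∀ g : E ≃ₗ[R] E, ∀ m ∈ M, g m ∈ M)
    (E₁ E₂ E₃ : Submodule R E)
    (h1 : Module.Injective R ↥E₁) (h2 : Module.Injective R ↥E₂) (h3 : Module.Injective R ↥E₃)
    (hsup : E₁ ⊔ E₂ ⊔ E₃ = ⊤)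
    (hind1 : E₁ ⊓ (E₂ ⊔ E₃) = ⊥) (hind2 : E₂ ⊓ (E₁ ⊔ E₃) = ⊥) (hind3 : E₃ ⊓ (E₁ ⊔ E₂) = ⊥)
    (hiso : Nonempty (↥E₁ ≃ₗ[R] ↥E₂)) :
    M = M ⊓ E₁ ⊔ M ⊓ E₂ ⊔ M ⊓ E₃ :=
  autInvariant_decomposition_of_hull_general M hinv E₁ E₂ E₃ hsup hind1 hind2 hiso
end

section
/- If M is an automorphism-invariant module and A, B are closed submodules of M with A ∩ B = 0, then A is B-injective and B is A-injective. -/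
universe u v w

/-! Let `K` be a closed essential extension of `i B` inside the injective hull `E`. Since `E` is
injective, `K` is a direct summand, with a complement containing `i A`; let `p` be the
corresponding projection onto `K`. Extend `f : X → B` (with `X ≤ A`) to an endomorphism `h` of
`E`. Then `θ = p h (1 - p)` satisfies `θ² = 0`, so `1 + θ` is an automorphism of `E`, and
automorphism-invariance forces `θ (i A) ⊆ i M ∩ K = i B`; thus `θ` restricts to a map `A → B`
extending `f`. -/

open Function

theorem IsChain.inf_sSup_eq_bot {α : Type*} [CompleteLattice α] [IsCompactlyGenerated α]
    {a : α} {c : Set α} (hc : IsChain (· ≤ ·) c) (h : ∀ b ∈ c, a ⊓ b = ⊥) : a ⊓ sSup c = ⊥ := by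
  rw [hc.directedOn.inf_sSup_eq]
  exact iSup₂_eq_bot.mpr h

section Essential

variable {R : Type u} [Ring R] {E : Type w} [AddCommGroup E] [Module R E]

theorem EssentialIn.inf_eq_bot {N P T : Submodule R E} (hNP : EssentialIn N P)
    (hT : T ⊓ N = ⊥) : T ⊓ P = ⊥ :=
  hNP.2 _ inf_le_right (le_bot_iff.mp (hT ▸ inf_le_inf_right N inf_le_left))

theorem EssentialIn.trans {N P Q : Submodule R E} (hNP : EssentialIn N P)
    (hPQ : EssentialIn P Q) : EssentialIn N Q :=
  ⟨hNP.1.trans hPQ.1, fun K hKQ hKN => hPQ.2 K hKQ (hNP.inf_eq_bot hKN)⟩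

theorem exists_essentialIn_closedSub (N : Submodule R E) :
    ∃ K : Submodule R E, EssentialIn N K ∧ ClosedSub K := by
  have hchain : ∀ c ⊆ {P | EssentialIn N P}, IsChain (· ≤ ·) c → ∀ P ∈ c,
      ∃ ub ∈ {P | EssentialIn N P}, ∀ Q ∈ c, Q ≤ ub := by
    refine fun c hcN hc P hP => ⟨sSup c, ⟨(hcN hP).1.trans (le_sSup hP), fun T hT hTN => ?_⟩,
      fun Q hQ => le_sSup hQ⟩
    rw [← inf_eq_left.mpr hT]
    exact hc.inf_sSup_eq_bot fun Q hQ => (hcN hQ).inf_eq_bot hTN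
  obtain ⟨K, -, hK⟩ := zorn_le_nonempty₀ _ hchain N
    ⟨le_rfl, fun T hT hTN => by rwa [inf_eq_left.mpr hT] at hTN⟩
  exact ⟨K, hK.prop, fun P hKP => (hK.eq_of_ge (hK.prop.trans hKP) hKP.1).symm⟩

theorem exists_le_maximal_inf_eq_bot {T N : Submodule R E} (hTN : T ⊓ N = ⊥) :
    ∃ C : Submodule R E, T ≤ C ∧ Maximal (· ⊓ N = ⊥) C := by
  have hchain : ∀ c ⊆ {C | C ⊓ N = ⊥}, IsChain (· ≤ ·) c → ∀ C ∈ c,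
      ∃ ub ∈ {C | C ⊓ N = ⊥}, ∀ D ∈ c, D ≤ ub := by
    refine fun c hcN hc _ _ => ⟨sSup c, ?_, fun D hD => le_sSup hD⟩
    rw [Set.mem_ofPred_eq, inf_comm]
    exact hc.inf_sSup_eq_bot fun D hD => by rw [inf_comm]; exact hcN hD
  exact zorn_le_nonempty₀ _ hchain T hTN

theorem ClosedSub.comap_eq_of_essentialIn_map {M : Type v} [AddCommGroup M] [Module R M]
    {i : M →ₗ[R] E} (hi : Injective i) {B : Submodule R M} (hB : ClosedSub B)
    {K : Submodule R E} (hBK : EssentialIn (B.map i) K) : K.comap i = B := by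
  refine (hB _ ⟨Submodule.map_le_iff_le_comap.mp hBK.1, fun L hLK hLB => ?_⟩).symm
  have hL : L.map i = ⊥ :=
    hBK.2 _ (Submodule.map_le_iff_le_comap.mpr hLK) (by rw [← Submodule.map_inf i hi, hLB,
      Submodule.map_bot])
  rwa [← Submodule.map_bot i, (Submodule.map_injective_of_injective hi).eq_iff] at hL

end Essential

section Injective

variable {R : Type u} [Ring R] {E : Type w} [AddCommGroup E] [Module R E] [Module.Injective R E]

theorem Module.Injective.exists_comp_eq_s4 {P : Type*} {Y : Type w} [AddCommGroup P] [Module R P]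
    [AddCommGroup Y] [Module R Y] (j : P →ₗ[R] Y) (hj : Function.Injective j) (g : P →ₗ[R] E) :
    ∃ h : Y →ₗ[R] E, h ∘ₗ j = g := by
  let e := LinearEquiv.ofInjective j hj
  obtain ⟨h, hh⟩ := Module.Injective.out (LinearMap.range j).subtype
    (LinearMap.range j).injective_subtype (g ∘ₗ e.symm.toLinearMap)
  exact ⟨h, LinearMap.ext fun x => by simpa [e] using hh (e x)⟩

theorem exists_end_eq_self_and_eq_zero {K C : Submodule R E} (hCK : C ⊓ K = ⊥) :
    ∃ p : Module.End R E, (∀ x ∈ K, p x = x) ∧ ∀ x ∈ C, p x = 0 := by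
  have hinj : Injective (K.subtype.coprod C.subtype) := by
    rw [← LinearMap.ker_eq_bot, LinearMap.ker_coprod_of_disjoint_range, Submodule.ker_subtype,
      Submodule.ker_subtype, Submodule.prod_bot]
    rw [Submodule.range_subtype, Submodule.range_subtype, disjoint_iff, inf_comm, hCK]
  obtain ⟨p, hp⟩ := Module.Injective.exists_comp_eq_s4 _ hinj (K.subtype ∘ₗ LinearMap.fst R K C)
  refine ⟨p, fun x hx => ?_, fun x hx => ?_⟩
  · simpa using LinearMap.congr_fun hp (⟨x, hx⟩, 0)
  · simpa using LinearMap.congr_fun hp (0, ⟨x, hx⟩)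

theorem ClosedSub.exists_projection {K C : Submodule R E} (hK : ClosedSub K)
    (hC : Maximal (· ⊓ K = ⊥) C) :
    ∃ p : Module.End R E, (∀ x ∈ K, p x = x) ∧ (∀ x ∈ C, p x = 0) ∧ ∀ y, p y ∈ K := by
  obtain ⟨p, hpK, hpC⟩ := exists_end_eq_self_and_eq_zero hC.prop
  have hcomap : ∀ Q : Submodule R E, Q ⊓ K = ⊥ → Q.comap p = C := by
    refine fun Q hQK => hC.eq_of_ge ?_ fun x hx => by simp [hpC x hx]
    rw [eq_bot_iff, ← hQK]
    rintro x ⟨hxQ, hxK⟩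
    exact ⟨by rwa [← hpK x hxK], hxK⟩
  have hker : LinearMap.ker p = C := by rw [← Submodule.comap_bot]; exact hcomap ⊥ (bot_inf_eq K)
  have hess : EssentialIn K (LinearMap.range p) := by
    refine ⟨fun x hx => ⟨x, hpK x hx⟩, fun Q hQ hQK => ?_⟩
    rw [← Submodule.map_comap_eq_of_le hQ, hcomap Q hQK, ← hker, ← Submodule.comap_bot,
      Submodule.map_comap_eq, inf_bot_eq]
  refine ⟨p, hpK, hpC, fun y => ?_⟩
  rw [hK _ hess]
  exact LinearMap.mem_range_self p y

end Injective

theorem LinearMap.exists_comp_eq_of_forall_mem_range {R : Type*} [Ring R] {P N E : Type*}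
    [AddCommGroup P] [Module R P] [AddCommGroup N] [Module R N] [AddCommGroup E] [Module R E]
    {j : N →ₗ[R] E} (hj : Function.Injective j) (φ : P →ₗ[R] E)
    (hφ : ∀ x, φ x ∈ LinearMap.range j) : ∃ ψ : P →ₗ[R] N, j ∘ₗ ψ = φ :=
  ⟨(LinearEquiv.ofInjective j hj).symm.toLinearMap ∘ₗ φ.codRestrict _ hφ,
    LinearMap.ext fun x => by simp [← LinearEquiv.ofInjective_apply (h := hj)]⟩

theorem HullAutInv.apply_mem_range_of_isNilpotent {R : Type u} [Ring R] {M : Type v} {E : Type w}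
    [AddCommGroup M] [Module R M] [AddCommGroup E] [Module R E] {i : M →ₗ[R] E}
    (hinv : HullAutInv i) {θ : Module.End R E} (hθ : IsNilpotent θ) (m : M) :
    θ (i m) ∈ LinearMap.range i := by
  let g := LinearMap.GeneralLinearGroup.generalLinearEquiv R E hθ.isUnit_one_add.unit
  have hg : g (i m) = i m + θ (i m) := rfl
  simpa [hg] using sub_mem (hinv g m) (LinearMap.mem_range_self i m)

theorem relInjective_of_closedSub {R : Type u} [Ring R] {M : Type v} {E : Type w}
    [AddCommGroup M] [Module R M] [AddCommGroup E] [Module R E] [Module.Injective R E]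
    {i : M →ₗ[R] E} (hi : Injective i) (hinv : HullAutInv i) {A B : Submodule R M}
    (hB : ClosedSub B) (hAB : A ⊓ B = ⊥) : RelInjective R B A := by
  intro X f
  obtain ⟨K, hBK, hK⟩ := exists_essentialIn_closedSub (B.map i)
  have hKB : K.comap i = B := hB.comap_eq_of_essentialIn_map hi hBK
  have hAK : A.map i ⊓ K = ⊥ :=
    hBK.inf_eq_bot (by rw [← Submodule.map_inf i hi, hAB, Submodule.map_bot])
  obtain ⟨C, hAC, hC⟩ := exists_le_maximal_inf_eq_bot hAK
  obtain ⟨p, hpK, hpC, hp⟩ := hK.exists_projection hC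
  have hiA : ∀ a : A, i a ∈ C := fun a => hAC ⟨a, a.2, rfl⟩
  obtain ⟨h, hh⟩ := Module.Injective.exists_comp_eq_s4 (i ∘ₗ A.subtype ∘ₗ X.subtype)
    (hi.comp (A.injective_subtype.comp X.injective_subtype)) (i ∘ₗ B.subtype ∘ₗ f)
  let θ : Module.End R E := p * h * (1 - p)
  have hθ : ∀ y, θ y = p (h (y - p y)) := fun y => rfl
  have hθθ : θ * θ = 0 := LinearMap.ext fun y => by
    rw [Module.End.mul_apply, hθ (θ y), hpK (θ y) (hp _), sub_self, map_zero, map_zero,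
      LinearMap.zero_apply]
  have hθX : ∀ x : X, θ (i x) = i (f x) := fun x => by
    rw [hθ, hpC _ (hiA x), sub_zero, ← hpK _ (hBK.1 ⟨f x, (f x).2, rfl⟩)]
    exact congrArg p (LinearMap.congr_fun hh x)
  have hθA : ∀ a : A, θ (i a) ∈ LinearMap.range (i ∘ₗ B.subtype) := fun a => by
    obtain ⟨m, hm⟩ := hinv.apply_mem_range_of_isNilpotent ⟨2, (pow_two θ).trans hθθ⟩ a
    have hmB : m ∈ K.comap i := by rw [Submodule.mem_comap, hm]; exact hp _
    exact ⟨⟨m, hKB ▸ hmB⟩, hm⟩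
  obtain ⟨ψ, hψ⟩ := LinearMap.exists_comp_eq_of_forall_mem_range (j := i ∘ₗ B.subtype)
    (hi.comp B.injective_subtype) (θ ∘ₗ i ∘ₗ A.subtype) hθA
  exact ⟨ψ, fun x => hi.comp B.injective_subtype ((LinearMap.congr_fun hψ x).trans (hθX x))⟩

/-- closed submodules of an automorphism-invariant module with zero
intersection are relatively injective. -/
theorem closed_submodules_relatively_injective {R : Type u} [Ring R]
    {M : Type v} {E : Type w} [AddCommGroup M] [Module R M] [AddCommGroup E] [Module R E]
    (i : M →ₗ[R] E) (hhull : IsInjectiveHull i) (hinv : HullAutInv i)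
    (A B : Submodule R M) (hA : ClosedSub A) (hB : ClosedSub B) (hAB : A ⊓ B = ⊥) :
    RelInjective R ↥A ↥B ∧ RelInjective R ↥B ↥A := by
  have := hhull.injE
  exact ⟨relInjective_of_closedSub hhull.inj hinv hA (by rwa [inf_comm]),
    relInjective_of_closedSub hhull.inj hinv hB hAB⟩
end

section
/- Let M be an automorphism-invariant module, K and T submodules of M that are complements of each other (each maximal with respect to trivial intersection with the other). Then every homomorphism f : E(K) → E(T) between their injective hulls satisfies f(K) ⊆ T; in particular T is K-injective. -/
universe u v w

/-!
Extending `f : E(K) → E(T)` by zero on `E(T)` gives a square-zero endomorphism `N` of `E(M)`.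
Then `1 + N` is an automorphism, so automorphism-invariance puts `f(K) = N(K)` inside
`M ∩ E(T)`, which equals `T` by the maximality of `T`. Since `E(T)` is injective, every map from a
submodule of `K` to `T` extends to `E(K) → E(T)`, and this extension carries `K` into `T`.
-/

section AutomorphismInvariant

variable {R : Type u} [Ring R] {E : Type v} [AddCommGroup E] [Module R E]
  {M : Submodule R E}

theorem Submodule.apply_mem_of_isNilpotent (hinv : ∀ g : E ≃ₗ[R] E, ∀ m ∈ M, g m ∈ M)
    {N : Module.End R E} (hN : IsNilpotent N) {m : E} (hm : m ∈ M) : N m ∈ M := by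
  let g := LinearMap.GeneralLinearGroup.generalLinearEquiv R E hN.isUnit_one_add.unit
  have hg : g m = m + N m := rfl
  simpa [hg] using M.sub_mem (hinv g m hm) hm

theorem Submodule.coe_apply_mem_of_isCompl (hinv : ∀ g : E ≃ₗ[R] E, ∀ m ∈ M, g m ∈ M)
    {EK ET : Submodule R E} (hc : IsCompl EK ET) (f : EK →ₗ[R] ET) {x : EK} (hx : (x : E) ∈ M) :
    (f x : E) ∈ M := by
  let N : Module.End R E := ET.subtype ∘ₗ f ∘ₗ EK.projectionOnto ET hc
  have hN : N * N = 0 := by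
    ext y
    simp [N, Submodule.projectionOnto_apply_right hc]
  have hNx : N x = f x := by simp [N, Submodule.projectionOnto_apply_left hc]
  exact hNx ▸ Submodule.apply_mem_of_isNilpotent hinv ⟨2, by rw [sq, hN]⟩ hx

end AutomorphismInvariant

theorem relInjective_of_forall_coe_apply_mem {R : Type u} [Ring R] {E : Type v} [AddCommGroup E]
    [Module R E] {K T EK ET : Submodule R E} (hK : K ≤ EK) (hT : T ≤ ET)
    [Module.Injective R ET] (hmaps : ∀ f : EK →ₗ[R] ET, ∀ x : EK, (x : E) ∈ K → (f x : E) ∈ T) :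
    RelInjective R T K := by
  intro A f
  obtain ⟨h, hh⟩ := Module.Injective.out (Submodule.inclusion hK ∘ₗ A.subtype)
    ((Submodule.inclusion_injective hK).comp A.injective_subtype) (Submodule.inclusion hT ∘ₗ f)
  refine ⟨LinearMap.codRestrict T (ET.subtype ∘ₗ h ∘ₗ Submodule.inclusion hK)
    fun x => hmaps h _ x.2, fun a => Subtype.ext (congrArg ET.subtype (hh a))⟩

theorem hom_of_hulls_of_complements_general {R : Type u} [Ring R]
    {E : Type v} [AddCommGroup E] [Module R E]
    (M : Submodule R E)
    (hinv : ∀ g : E ≃ₗ[R] E, ∀ m ∈ M, g m ∈ M)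
    (K T : Submodule R E) (hK : K ≤ M) (hT : T ≤ M)
    (hTmax : ∀ T' : Submodule R E, T' ≤ M → K ⊓ T' = ⊥ → T ≤ T' → T' = T)
    (EK ET : Submodule R E) (hET : Module.Injective R ↥ET)
    (hdisj : EK ⊓ ET = ⊥) (hsup : EK ⊔ ET = ⊤)
    (hKess : EssentialIn K EK) (hTess : EssentialIn T ET) :
    (∀ f : ↥EK →ₗ[R] ↥ET, ∀ x : ↥EK, (x : E) ∈ K → ((f x : E) ∈ T)) ∧
      RelInjective R ↥T ↥K := by
  have hc : IsCompl EK ET := ⟨disjoint_iff.mpr hdisj, codisjoint_iff.mpr hsup⟩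
  have hMET : M ⊓ ET = T := by
    refine hTmax _ inf_le_left (eq_bot_iff.mpr fun x hx => ?_) (le_inf hT hTess.1)
    exact hdisj ▸ ⟨hKess.1 hx.1, hx.2.2⟩
  have hmaps : ∀ f : ↥EK →ₗ[R] ↥ET, ∀ x : ↥EK, (x : E) ∈ K → ((f x : E) ∈ T) :=
    fun f x hx => hMET ▸ ⟨Submodule.coe_apply_mem_of_isCompl hinv hc f (hK hx), (f x).2⟩
  exact ⟨hmaps, relInjective_of_forall_coe_apply_mem hKess.1 hTess.1 hmaps⟩

/-- if `K` and `T` are complements of each other in the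
automorphism-invariant module `M`, then every homomorphism `E(K) → E(T)` maps `K` into
`T`; in particular `T` is `K`-injective. -/
theorem hom_of_hulls_of_complements {R : Type u} [Ring R]
    {E : Type v} [AddCommGroup E] [Module R E]
    (hE : Module.Injective R E) (M : Submodule R E) (hess : EssentialSub M)
    (hinv : ∀ g : E ≃ₗ[R] E, ∀ m ∈ M, g m ∈ M)
    (K T : Submodule R E) (hK : K ≤ M) (hT : T ≤ M) (hKT : K ⊓ T = ⊥)
    (hTmax : ∀ T' : Submodule R E, T' ≤ M → K ⊓ T' = ⊥ → T ≤ T' → T' = T)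
    (hKmax : ∀ K' : Submodule R E, K' ≤ M → K' ⊓ T = ⊥ → K ≤ K' → K' = K)
    (EK ET : Submodule R E) (hEK : Module.Injective R ↥EK) (hET : Module.Injective R ↥ET)
    (hdisj : EK ⊓ ET = ⊥) (hsup : EK ⊔ ET = ⊤)
    (hKess : EssentialIn K EK) (hTess : EssentialIn T ET) :
    (∀ f : ↥EK →ₗ[R] ↥ET, ∀ x : ↥EK, (x : E) ∈ K → ((f x : E) ∈ T)) ∧
      RelInjective R ↥T ↥K :=
  hom_of_hulls_of_complements_general M hinv K T hK hT hTmax EK ET hET hdisj hsup hKess hTess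
end

section
/- If M is an automorphism-invariant module, A is a closed submodule of M, B is a closed submodule of M with A ∩ B = 0, and h : A → M is a monomorphism with A ∩ h(A) = 0, then h(A) is a closed submodule of M. -/
universe u v w

/-! `A ⊕ h(A)` embeds in the injective hull `E`, and the swap `(a, a') ↦ (a', a)`
of `A × A` extends to an automorphism of `E` (by the identity on a maximal complement `K`, so that
the sum is essential, then to `E` by injectivity; an injective endomorphism of `E` with essential
range is onto). By automorphism invariance it restricts to an endomorphism `φ` of `M` with
`φ ∘ h = id_A`. Then any essential extension `P` of `h(A)` maps under `φ` to an essential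
extension of `A`, so `φ(P) = A` by closedness of `A`, and then `P = h(A)` because `ker φ ∩ P = 0`. -/

theorem exists_disjoint_forall_inf_sup_eq_bot {α : Type*} [CompleteLattice α]
    [IsModularLattice α] [IsCompactlyGenerated α] (a : α) :
    ∃ b, Disjoint a b ∧ ∀ c, c ⊓ (a ⊔ b) = ⊥ → c = ⊥ := by
  obtain ⟨b, hb⟩ := zorn_le₀ {b | Disjoint a b} fun c hcs hc =>
    ⟨sSup c, hc.directedOn.disjoint_sSup_right.2 fun _ hx => hcs hx, fun _ => le_sSup⟩
  refine ⟨b, hb.prop, fun c hc => ?_⟩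
  have hcb : c ≤ b := le_sup_right.trans <| hb.le_of_ge
    (hb.prop.disjoint_sup_right_of_disjoint_sup_left (disjoint_iff.2 hc).symm) le_sup_left
  exact eq_bot_iff.2 (hc ▸ le_inf le_rfl (hcb.trans le_sup_right))

namespace LinearMap

theorem injective_coprod_of_disjoint_range {R X Y Z : Type*} [Ring R] [AddCommGroup X]
    [AddCommGroup Y] [AddCommGroup Z] [Module R X] [Module R Y] [Module R Z]
    {f : X →ₗ[R] Z} {g : Y →ₗ[R] Z} (hf : Function.Injective f) (hg : Function.Injective g)
    (hfg : Disjoint (range f) (range g)) : Function.Injective (f.coprod g) := by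
  rw [← ker_eq_bot, ker_coprod_of_disjoint_range f g hfg, ker_eq_bot.2 hf, ker_eq_bot.2 hg,
    Submodule.prod_bot]

end LinearMap

section EssentialExtensions

open LinearMap

variable {R : Type u} [Ring R]

theorem EssentialSub.mono {M : Type v} [AddCommGroup M] [Module R M] {N N' : Submodule R M}
    (hN : EssentialSub N) (hle : N ≤ N') : EssentialSub N' :=
  fun K hK => hN K (eq_bot_iff.2 (hK ▸ inf_le_inf_left K hle))

variable {E : Type w} [AddCommGroup E] [Module R E]

theorem surjective_of_injective_of_essentialSub_range (hE : Module.Injective R E)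
    {τ : E →ₗ[R] E} (hτ : Function.Injective τ) (hess : EssentialSub (range τ)) :
    Function.Surjective τ := by
  obtain ⟨r, hr⟩ := hE.out τ hτ LinearMap.id
  have hr_inj : Function.Injective r := by
    refine ker_eq_bot.1 (hess _ (eq_bot_iff.2 ?_))
    rintro _ ⟨hx, y, rfl⟩
    have hy : y = 0 := (hr y).symm.trans hx
    simp [hy]
  exact fun y => ⟨r y, hr_inj (hr (r y))⟩

theorem exists_linearEquiv_extend (hE : Module.Injective R E) {N : Submodule R E}
    (hN : EssentialSub N) (f : N →ₗ[R] E) (hf : Function.Injective f)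
    (hfN : EssentialSub (range f)) : ∃ g : E ≃ₗ[R] E, ∀ x : N, g x = f x := by
  obtain ⟨τ, hτ⟩ := hE.out N.subtype N.injective_subtype f
  have hτ_inj : Function.Injective τ := by
    refine ker_eq_bot.1 (hN _ (eq_bot_iff.2 ?_))
    rintro x ⟨hx, hxN⟩
    have hfx : f ⟨x, hxN⟩ = f 0 := ((hτ ⟨x, hxN⟩).symm.trans hx).trans f.map_zero.symm
    exact congrArg Subtype.val (hf hfx)
  have hτ_ess : EssentialSub (range τ) := hfN.mono (by rintro _ ⟨y, rfl⟩; exact ⟨y, hτ y⟩)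
  exact ⟨.ofBijective τ ⟨hτ_inj, surjective_of_injective_of_essentialSub_range hE hτ_inj hτ_ess⟩,
    hτ⟩

theorem exists_linearEquiv_comp_eq {X : Type*} [AddCommGroup X] [Module R X]
    (hE : Module.Injective R E) {j : X →ₗ[R] E} (hj : Function.Injective j) (σ : X ≃ₗ[R] X) :
    ∃ g : E ≃ₗ[R] E, ∀ x, g (j x) = j (σ x) := by
  obtain ⟨K, hdisj, hess⟩ := exists_disjoint_forall_inf_sup_eq_bot (range j)
  set d := j.coprod K.subtype
  have hd : Function.Injective d :=
    injective_coprod_of_disjoint_range hj K.injective_subtype (by rwa [Submodule.range_subtype])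
  have hd_ess : EssentialSub (range d) := by
    rwa [range_coprod, Submodule.range_subtype]
  set e := LinearEquiv.ofInjective d hd
  set σ' := e.symm.trans (σ.prodCongr (LinearEquiv.refl R K))
  obtain ⟨g, hg⟩ := exists_linearEquiv_extend hE hd_ess (d ∘ₗ σ'.toLinearMap)
    (hd.comp σ'.injective) (by rwa [range_comp_of_range_eq_top _ σ'.range])
  refine ⟨g, fun x => ?_⟩
  simpa [d, σ', e] using hg (e (x, 0))

end EssentialExtensions

section Closed

open LinearMap

variable {R : Type u} [Ring R] {M : Type v} [AddCommGroup M] [Module R M]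

theorem HullAutInv.exists_comp_eq {E : Type w} [AddCommGroup E] [Module R E]
    {i : M →ₗ[R] E} (hinv : HullAutInv i) (hi : Function.Injective i) (g : E ≃ₗ[R] E) :
    ∃ φ : M →ₗ[R] M, ∀ m, i (φ m) = g (i m) :=
  ⟨(LinearEquiv.ofInjective i hi).symm.toLinearMap ∘ₗ
      (g.toLinearMap ∘ₗ i).codRestrict _ (hinv g),
    fun m => LinearEquiv.ofInjective_symm_apply i (h := hi) (⟨g (i m), hinv g m⟩ : range i)⟩

variable {A P : Submodule R M} {h : A →ₗ[R] M} {φ : M →ₗ[R] M}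

theorem EssentialIn.comap_inf_eq_bot (hφ : ∀ a, φ (h a) = a) (hP : EssentialIn (range h) P)
    {K : Submodule R M} (hKA : K ⊓ A = ⊥) : K.comap φ ⊓ P = ⊥ := by
  refine hP.2 _ inf_le_right (eq_bot_iff.2 ?_)
  rintro _ ⟨⟨hx, -⟩, a, rfl⟩
  have ha : (a : M) ∈ K ⊓ A := ⟨hφ a ▸ hx, a.2⟩
  rw [hKA, Submodule.mem_bot, Submodule.coe_eq_zero] at ha
  simp [ha]

theorem EssentialIn.map_of_leftInverse (hφ : ∀ a, φ (h a) = a) (hP : EssentialIn (range h) P) :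
    EssentialIn A (P.map φ) := by
  refine ⟨fun a ha => ⟨h ⟨a, ha⟩, hP.1 ⟨_, rfl⟩, hφ _⟩, fun K hK hKA => eq_bot_iff.2 ?_⟩
  intro x hx
  obtain ⟨p, hp, rfl⟩ := hK hx
  have hp0 : p ∈ K.comap φ ⊓ P := ⟨hx, hp⟩
  rw [hP.comap_inf_eq_bot hφ hKA, Submodule.mem_bot] at hp0
  simp [hp0]

theorem ClosedSub.range_of_leftInverse (hA : ClosedSub A) (hφ : ∀ a, φ (h a) = a) :
    ClosedSub (range h) := by
  intro P hP
  have hAP : A = P.map φ := hA _ (hP.map_of_leftInverse hφ)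
  have hker : ker φ ⊓ P = ⊥ := by
    simpa only [Submodule.comap_bot] using hP.comap_inf_eq_bot hφ (bot_inf_eq A)
  refine le_antisymm hP.1 fun p hp => ?_
  have hφp : φ p ∈ A := hAP ▸ ⟨p, hp, rfl⟩
  have hsub : p - h ⟨φ p, hφp⟩ ∈ ker φ ⊓ P := ⟨by simp [hφ], P.sub_mem hp (hP.1 ⟨_, rfl⟩)⟩
  rw [hker, Submodule.mem_bot, sub_eq_zero] at hsub
  exact hsub ▸ ⟨_, rfl⟩

end Closed

theorem image_of_mono_is_closed_general {R : Type u} [Ring R]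
    {M : Type v} {E : Type w} [AddCommGroup M] [Module R M] [AddCommGroup E] [Module R E]
    (i : M →ₗ[R] E) (hhull : IsInjectiveHull i) (hinv : HullAutInv i)
    (A : Submodule R M) (hA : ClosedSub A)
    (h : ↥A →ₗ[R] M) (hmono : Function.Injective h)
    (hdisj : A ⊓ LinearMap.range h = ⊥) :
    ClosedSub (LinearMap.range h) := by
  have hj : Function.Injective ((i ∘ₗ A.subtype).coprod (i ∘ₗ h)) := by
    refine LinearMap.injective_coprod_of_disjoint_range (hhull.inj.comp A.injective_subtype)
      (hhull.inj.comp hmono) ?_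
    rw [LinearMap.range_comp, LinearMap.range_comp, Submodule.range_subtype]
    exact Submodule.disjoint_map hhull.inj (disjoint_iff.2 hdisj)
  obtain ⟨g, hg⟩ := exists_linearEquiv_comp_eq hhull.injE hj (LinearEquiv.prodComm R A A)
  obtain ⟨φ, hφ⟩ := hinv.exists_comp_eq hhull.inj g
  refine hA.range_of_leftInverse (φ := φ) fun a => hhull.inj ?_
  simpa [hφ] using hg (0, a)

/-- if `A`, `B` are closed submodules of the automorphism-invariant module
`M` with `A ⊓ B = 0` and `h : A → M` is a monomorphism with `A ⊓ h(A) = 0`, then `h(A)`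
is closed in `M`. -/
theorem image_of_mono_is_closed {R : Type u} [Ring R]
    {M : Type v} {E : Type w} [AddCommGroup M] [Module R M] [AddCommGroup E] [Module R E]
    (i : M →ₗ[R] E) (hhull : IsInjectiveHull i) (hinv : HullAutInv i)
    (A B : Submodule R M) (hA : ClosedSub A) (hB : ClosedSub B) (hAB : A ⊓ B = ⊥)
    (h : ↥A →ₗ[R] M) (hmono : Function.Injective h)
    (hdisj : A ⊓ LinearMap.range h = ⊥) :
    ClosedSub (LinearMap.range h) :=
  image_of_mono_is_closed_general i hhull hinv A hA h hmono hdisj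
end

section
/- Let R be the subring of the product ∏_{n∈ℕ} ℤ/2ℤ consisting of sequences that are eventually constant. Then R_R is automorphism-invariant but R is not self-injective. -/
universe u v w

open Filter in
/-- The subring of `∏_{n ∈ ℕ} ℤ/2ℤ` consisting of eventually constant sequences. -/
def EvConst : Subring (ℕ → ZMod 2) where
  carrier := {x | ∃ a : ZMod 2, ∀ᶠ n in atTop, x n = a}
  zero_mem' := ⟨0, Eventually.of_forall fun _ => rfl⟩
  one_mem' := ⟨1, Eventually.of_forall fun _ => rfl⟩
  add_mem' := by
    rintro x y ⟨a, ha⟩ ⟨b, hb⟩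
    exact ⟨a + b, (ha.and hb).mono fun n ⟨h1, h2⟩ => by simp [Pi.add_apply, h1, h2]⟩
  neg_mem' := by
    rintro x ⟨a, ha⟩
    exact ⟨-a, ha.mono fun n h => by simp [Pi.neg_apply, h]⟩
  mul_mem' := by
    rintro x y ⟨a, ha⟩ ⟨b, hb⟩
    exact ⟨a * b, (ha.and hb).mono fun n ⟨h1, h2⟩ => by simp [Pi.mul_apply, h1, h2]⟩

/-!
Every `R`-linear endomorphism `h` of `S = ∏ ℤ/2ℤ` is multiplication by the sequence
`n ↦ h (single n 1) n`, because the idempotents `single n 1` lie in `R`; if `h` is injective that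
sequence is `1`, so the identity is the only injective endomorphism of `S`. Since `S` is an
injective hull of `R`, there are injective maps `φ : S → E`, `π : E → S` over `R` for any other
hull `E`, and for an automorphism `g` of `E` the endomorphism `π ∘ g ∘ φ` is the identity, which
forces `g` to fix `R`. On the other hand `R` is essential in `S ≠ R`, and an injective module has
no proper essential extension.
-/

section Hull

variable {R : Type u} [Ring R] {M N Q : Type v} [AddCommGroup M] [Module R M]
  [AddCommGroup N] [Module R N] [AddCommGroup Q] [Module R Q]

theorem EssentialSub.injective_of_injective_comp {i : M →ₗ[R] N}
    (hi : EssentialSub (LinearMap.range i)) {f : N →ₗ[R] Q}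
    (hfi : Function.Injective (f ∘ₗ i)) : Function.Injective f := by
  rw [← LinearMap.ker_eq_bot]
  refine hi _ ((Submodule.eq_bot_iff _).2 ?_)
  rintro _ ⟨hf, m, rfl⟩
  have hm : m = 0 := hfi (by simpa using hf)
  simp [hm]

theorem IsInjectiveHull.exists_injective_extension {i : M →ₗ[R] N} (hi : IsInjectiveHull i)
    [Module.Injective R Q] {j : M →ₗ[R] Q} (hj : Function.Injective j) :
    ∃ φ : N →ₗ[R] Q, Function.Injective φ ∧ ∀ m, φ (i m) = j m := by
  obtain ⟨φ, hφ⟩ := Module.Injective.out i hi.inj j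
  refine ⟨φ, hi.ess.injective_of_injective_comp ?_, hφ⟩
  simpa [Function.comp_def, hφ] using hj

theorem surjective_of_essentialSub_of_injective [Module.Injective R M] {i : M →ₗ[R] N}
    (hi : Function.Injective i) (hess : EssentialSub (LinearMap.range i)) :
    Function.Surjective i := by
  obtain ⟨π, hπ⟩ := Module.Injective.out i hi LinearMap.id
  have hπinj : Function.Injective π :=
    hess.injective_of_injective_comp fun a b hab => by simpa [hπ] using hab
  exact fun y => ⟨π y, hπinj (hπ (π y))⟩

theorem autInvariant_of_isInjectiveHull {i₀ : M →ₗ[R] N} (h₀ : IsInjectiveHull i₀)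
    (hN : ∀ h : N →ₗ[R] N, Function.Injective h → h = LinearMap.id) : AutInvariant R M := by
  intro E _ _ i hi g m
  have := hi.injE
  have := h₀.injE
  obtain ⟨φ, hφinj, hφ⟩ := h₀.exists_injective_extension hi.inj
  obtain ⟨π, hπinj, hπ⟩ := hi.exists_injective_extension h₀.inj
  have hid := hN (π ∘ₗ g.toLinearMap ∘ₗ φ) (hπinj.comp (g.injective.comp hφinj))
  have hfix := LinearMap.congr_fun hid (i₀ m)
  simp only [LinearMap.comp_apply, LinearEquiv.coe_coe, hφ, LinearMap.id_apply] at hfix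
  exact ⟨m, hπinj (by rw [hfix, hπ])⟩

end Hull

namespace EvConst

def single (n : ℕ) : EvConst :=
  ⟨Pi.single n 1, 0, Filter.eventually_atTop.2
    ⟨n + 1, fun _ hm => Pi.single_eq_of_ne (by omega) 1⟩⟩

theorem zmod_two_eq_zero_or_one (c : ZMod 2) : c = 0 ∨ c = 1 := by decide +revert

theorem single_smul (n : ℕ) (x : ℕ → ZMod 2) : single n • x = Pi.single n (x n) := by
  ext m
  rcases eq_or_ne m n with rfl | h
  · simp [Subring.smul_def, single]
  · simp [Subring.smul_def, single, h]

theorem coe_single_mul (n : ℕ) (x : EvConst) :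
    ((single n * x : EvConst) : ℕ → ZMod 2) = Pi.single n ((x : ℕ → ZMod 2) n) :=
  single_smul n x

theorem apply_eq_apply_single_smul {M : Type*} [AddCommGroup M] [Module EvConst M]
    (f : M →ₗ[EvConst] ℕ → ZMod 2) (m : M) (n : ℕ) : f m n = f (single n • m) n := by
  rw [map_smul, single_smul, Pi.single_eq_same]

theorem single_smul_mem_range (n : ℕ) (x : ℕ → ZMod 2) :
    single n • x ∈ LinearMap.range (Algebra.linearMap EvConst (ℕ → ZMod 2)) := by
  rcases zmod_two_eq_zero_or_one (x n) with h | h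
  · exact ⟨0, by simp [single_smul, h]⟩
  · exact ⟨single n, by simp [single_smul, h]; rfl⟩

theorem essentialSub_range :
    EssentialSub (LinearMap.range (Algebra.linearMap EvConst (ℕ → ZMod 2))) := by
  intro K hK
  refine (Submodule.eq_bot_iff _).2 fun x hx => funext fun n => ?_
  have h : single n • x ∈ K ⊓ LinearMap.range (Algebra.linearMap EvConst (ℕ → ZMod 2)) :=
    ⟨K.smul_mem _ hx, single_smul_mem_range n x⟩
  rw [hK, Submodule.mem_bot] at h
  simpa [single_smul] using congr_fun h n

/-- The extension of `f` is multiplication by the sequence `s` with `s n = f (single n) n`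
(and `s n = 0` when `single n ∉ I`). -/
theorem baer : Module.Baer EvConst (ℕ → ZMod 2) := by
  classical
  intro I f
  let s : ℕ → ZMod 2 := fun n => if h : single n ∈ I then f ⟨single n, h⟩ n else 0
  refine ⟨LinearMap.toSpanSingleton EvConst _ s, fun x hx => funext fun n => ?_⟩
  rw [apply_eq_apply_single_smul f ⟨x, hx⟩ n, LinearMap.toSpanSingleton_apply]
  rcases zmod_two_eq_zero_or_one ((x : ℕ → ZMod 2) n) with h | h
  · have h0 : single n • (⟨x, hx⟩ : I) = 0 := by
      ext1; ext1; simpa [h] using coe_single_mul n x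
    simp [h0, Subring.smul_def, h]
  · have hmul : single n * x = single n :=
      Subtype.ext ((coe_single_mul n x).trans (by rw [h]; rfl))
    have hI : single n ∈ I := hmul ▸ I.mul_mem_left _ hx
    have h1 : single n • (⟨x, hx⟩ : I) = ⟨single n, hI⟩ := Subtype.ext hmul
    simp [h1, s, hI, Subring.smul_def, h]

theorem isInjectiveHull : IsInjectiveHull (Algebra.linearMap EvConst (ℕ → ZMod 2)) where
  inj := Subtype.val_injective
  injE := baer.injective
  ess := essentialSub_range

theorem endomorphism_apply (h : (ℕ → ZMod 2) →ₗ[EvConst] ℕ → ZMod 2) (x : ℕ → ZMod 2)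
    (n : ℕ) : h x n = x n * h (Pi.single n 1) n := by
  rw [apply_eq_apply_single_smul h x n, single_smul]
  rcases zmod_two_eq_zero_or_one (x n) with hx | hx <;> simp [hx]

theorem eq_id_of_injective (h : (ℕ → ZMod 2) →ₗ[EvConst] ℕ → ZMod 2)
    (hinj : Function.Injective h) : h = LinearMap.id := by
  refine LinearMap.ext fun x => funext fun n => ?_
  rw [endomorphism_apply, LinearMap.id_apply]
  have hdiag : h (Pi.single n 1) n = 1 := by
    refine (zmod_two_eq_zero_or_one _).resolve_left fun h0 => ?_
    have hzero : h (Pi.single n 1) = h 0 := by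
      refine (map_zero h).symm ▸ funext fun m => ?_
      rw [endomorphism_apply]
      rcases eq_or_ne m n with rfl | hm
      · simp [h0]
      · simp [hm]
    simpa using congr_fun (hinj hzero) n
  rw [hdiag, mul_one]

theorem natCast_notMem : (fun n : ℕ => (n : ZMod 2)) ∉ EvConst := by
  rintro ⟨a, ha⟩
  obtain ⟨N, hN⟩ := Filter.eventually_atTop.1 ha
  have h0 := hN (2 * N) (by omega)
  have h1 := hN (2 * N + 1) (by omega)
  simp only [Nat.cast_add, Nat.cast_mul, Nat.cast_ofNat, Nat.cast_one] at h0 h1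
  simp [← h0] at h1

end EvConst

/-- the ring of eventually constant `ℤ/2ℤ`-sequences is
automorphism-invariant over itself but not self-injective. -/
theorem evConst_autInvariant_not_selfInjective :
    AutInvariant EvConst EvConst ∧ ¬ Module.Injective EvConst EvConst := by
  refine ⟨autInvariant_of_isInjectiveHull EvConst.isInjectiveHull EvConst.eq_id_of_injective,
    fun _ => EvConst.natCast_notMem ?_⟩
  obtain ⟨r, hr⟩ := surjective_of_essentialSub_of_injective EvConst.isInjectiveHull.inj
    EvConst.essentialSub_range (fun n : ℕ => (n : ZMod 2))
  exact hr ▸ r.2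
end

section
/- Let M = A ⊕ B with A and B orthogonal modules, C a submodule of M, and f : C → M a monomorphism. Then f(C ∩ B) ∩ B is an essential submodule of f(C ∩ B). -/
/-! If `K ≤ f(C ∩ B)` meets `B` trivially, the projection of `M` onto `A` along `B` embeds `K`
into `A`, while `f⁻¹` embeds `K` into `C ∩ B ≤ B`. Orthogonality of `A` and `B` forces `K = 0`. -/

universe u v w

theorem Submodule.injective_projectionOnto_comp_subtype {R : Type u} [Ring R] {M : Type v}
    [AddCommGroup M] [Module R M] {A B : Submodule R M} (hcompl : IsCompl A B)
    {K : Submodule R M} (hK : Disjoint K B) :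
    Function.Injective (A.projectionOnto B hcompl ∘ₗ K.subtype) := by
  rw [← LinearMap.ker_eq_bot, LinearMap.ker_comp, Submodule.ker_projectionOnto]
  exact Submodule.disjoint_iff_comap_eq_bot.mp hK

namespace OrthogonalMod

variable {R : Type u} [Ring R]

theorem subsingleton_of_injective {X : Type v} {Y : Type w} [AddCommGroup X] [Module R X]
    [AddCommGroup Y] [Module R Y] (horth : OrthogonalMod R X Y) {N : Type*} [AddCommGroup N]
    [Module R N] {g : N →ₗ[R] X} (hg : Function.Injective g) {k : N →ₗ[R] Y}
    (hk : Function.Injective k) : Subsingleton N := by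
  have hrange : LinearMap.range g = ⊥ :=
    horth _ _ ⟨(LinearEquiv.ofInjective g hg).symm.trans (LinearEquiv.ofInjective k hk)⟩
  rw [LinearMap.range_eq_bot] at hrange
  subst hrange
  exact ⟨fun a b => hg rfl⟩

theorem eq_bot_of_disjoint_of_injective {M : Type v} [AddCommGroup M] [Module R M]
    {A B : Submodule R M} (hcompl : IsCompl A B) (horth : OrthogonalMod R A B)
    {K : Submodule R M} (hK : Disjoint K B) {g : K →ₗ[R] B} (hg : Function.Injective g) :
    K = ⊥ :=
  haveI := horth.subsingleton_of_injective
    (Submodule.injective_projectionOnto_comp_subtype hcompl hK) hg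
  Submodule.eq_bot_of_subsingleton

end OrthogonalMod

/-- for `M = A ⊕ B` with `A`, `B` orthogonal, `C ≤ M` and a monomorphism
`f : C → M`, `f(C ∩ B) ∩ B` is essential in `f(C ∩ B)`. -/
theorem image_inter_essential {R : Type u} [Ring R]
    {M : Type v} [AddCommGroup M] [Module R M]
    (A B : Submodule R M) (hcompl : IsCompl A B)
    (horth : OrthogonalMod R ↥A ↥B)
    (C : Submodule R M) (f : ↥C →ₗ[R] M) (hf : Function.Injective f) :
    EssentialIn (Submodule.map f ((C ⊓ B).comap C.subtype) ⊓ B)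
      (Submodule.map f ((C ⊓ B).comap C.subtype)) := by
  set S : Submodule R C := (C ⊓ B).comap C.subtype
  refine ⟨inf_le_left, fun K hKP hK => ?_⟩
  have hKB : Disjoint K B := by
    rwa [disjoint_iff, ← inf_eq_left.mpr hKP, inf_assoc]
  let toB : S →ₗ[R] B := (C.subtype ∘ₗ S.subtype).codRestrict B fun s => s.2.2
  let embed : K →ₗ[R] B :=
    toB ∘ₗ (S.equivMapOfInjective f hf).symm.toLinearMap ∘ₗ Submodule.inclusion hKP
  have htoB : Function.Injective toB :=
    (LinearMap.injective_codRestrict_iff _).mpr (C.injective_subtype.comp S.injective_subtype)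
  have hembed : Function.Injective embed := by
    simp only [embed, LinearMap.coe_comp, LinearEquiv.coe_coe]
    exact htoB.comp ((LinearEquiv.injective _).comp (Submodule.inclusion_injective hKP))
  exact horth.eq_bot_of_disjoint_of_injective hcompl hKB hembed
end

section
/- Let M = A ⊕ B with A and B orthogonal and B square-free, C a submodule of M, and f : C → M a monomorphism. Then f(C ∩ B) ∩ (C ∩ B) is essential in both f(C ∩ B) and C ∩ B. -/
universe u v w

/-!
Let `N ≤ C` with `N ⊆ B` and `f N ∩ N = 0`. The elements of `N` that `f` sends into `B` form a
submodule `N'` with `f N'` and `N'` disjoint isomorphic submodules of `B`, so `N' = 0` because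
`B` is square-free. Hence the projection of `M = A ⊕ B` onto `A` along `B` is injective on
`f N`, which embeds `N ⊆ B` into `A`, and `N = 0` by orthogonality. Both essentiality claims
follow from this, the second one by exchanging the roles of `f` and the inclusion of `C`.
-/

section

variable {R : Type u} [Ring R] {M : Type v} [AddCommGroup M] [Module R M]

open Submodule

theorem SquareFreeMod.eq_bot_of_disjoint {B : Submodule R M} (hsf : SquareFreeMod R B)
    {X Y : Submodule R M} (hX : X ≤ B) (hY : Y ≤ B) (hXY : Disjoint X Y) (e : X ≃ₗ[R] Y) :
    X = ⊥ := by
  have hcomap : X.comap B.subtype = ⊥ :=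
    hsf _ (Y.comap B.subtype)
      (by rw [← comap_inf, hXY.eq_bot, comap_bot, ker_subtype])
      ⟨(comapSubtypeEquivOfLe hX).trans (e.trans (comapSubtypeEquivOfLe hY).symm)⟩
  rw [← inf_eq_right.mpr hX, ← map_comap_subtype, hcomap, Submodule.map_bot]

theorem OrthogonalMod.eq_bot_of_injective {X : Type w} [AddCommGroup X] [Module R X]
    {B : Submodule R M} (horth : OrthogonalMod R X B) {Y : Submodule R M} (hY : Y ≤ B)
    (φ : Y →ₗ[R] X) (hφ : Function.Injective φ) : Y = ⊥ := by
  have hrange : LinearMap.range φ = ⊥ :=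
    horth _ (Y.comap B.subtype)
      ⟨(LinearEquiv.ofInjective φ hφ).symm.trans (comapSubtypeEquivOfLe hY).symm⟩
  have hφ0 : φ = 0 := LinearMap.range_eq_bot.mp hrange
  refine (Submodule.eq_bot_iff _).mpr fun y hy => ?_
  have : (⟨y, hy⟩ : Y) = 0 := hφ (by rw [hφ0, LinearMap.zero_apply, map_zero])
  simpa using congrArg Subtype.val this

theorem eq_bot_of_disjoint_map_map {A B : Submodule R M} (hcompl : IsCompl A B)
    (horth : OrthogonalMod R A B) (hsf : SquareFreeMod R B)
    {X : Type w} [AddCommGroup X] [Module R X] (f g : X →ₗ[R] M)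
    (hf : Function.Injective f) (hg : Function.Injective g) (N : Submodule R X)
    (hgN : N.map g ≤ B) (hdisj : Disjoint (N.map f) (N.map g)) : N = ⊥ := by
  have hN'f : (N ⊓ B.comap f).map f = ⊥ :=
    hsf.eq_bot_of_disjoint (map_le_iff_le_comap.mpr inf_le_right)
      ((map_mono inf_le_left).trans hgN)
      (hdisj.mono (map_mono inf_le_left) (map_mono inf_le_left))
      ((equivMapOfInjective f hf _).symm.trans (equivMapOfInjective g hg _))
  have hN' : Disjoint N (B.comap f) := by
    rw [disjoint_iff, ← map_injective_of_injective hf |>.eq_iff, hN'f, Submodule.map_bot]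
  let π : X →ₗ[R] A := (projectionOnto A B hcompl).comp f
  have hπ : Function.Injective (π.domRestrict N) := by
    rwa [LinearMap.injective_domRestrict_iff, LinearMap.ker_comp, ker_projectionOnto]
  have hgN_bot : N.map g = ⊥ :=
    horth.eq_bot_of_injective hgN (π.domRestrict N ∘ₗ (equivMapOfInjective g hg N).symm)
      (hπ.comp (equivMapOfInjective g hg N).symm.injective)
  rw [← map_injective_of_injective hg |>.eq_iff, hgN_bot, Submodule.map_bot]

theorem essentialIn_map_inf_map {X : Type w} [AddCommGroup X] [Module R X]
    (f g : X →ₗ[R] M) (P : Submodule R X)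
    (h : ∀ N ≤ P, Disjoint (N.map f) (N.map g) → N = ⊥) :
    EssentialIn (P.map f ⊓ P.map g) (P.map f) := by
  refine ⟨inf_le_left, fun K hK hKbot => ?_⟩
  have hmap : (P ⊓ K.comap f).map f = K := by
    refine le_antisymm ((map_mono inf_le_right).trans (map_comap_le f K)) fun k hk => ?_
    obtain ⟨x, hx, rfl⟩ := hK hk
    exact ⟨x, ⟨hx, hk⟩, rfl⟩
  have hdisj : Disjoint ((P ⊓ K.comap f).map f) ((P ⊓ K.comap f).map g) := by
    rw [hmap, disjoint_iff, eq_bot_iff, ← hKbot, ← inf_assoc, inf_eq_left.mpr hK]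
    exact inf_le_inf_left K (map_mono inf_le_left)
  rw [← hmap, h _ inf_le_left hdisj, Submodule.map_bot]

end

/-- for `M = A ⊕ B` with `A`, `B` orthogonal and `B` square-free, `C ≤ M`
and a monomorphism `f : C → M`, `f(C ∩ B) ∩ (C ∩ B)` is essential in both `f(C ∩ B)` and
`C ∩ B`. -/
theorem image_inter_essential_both {R : Type u} [Ring R]
    {M : Type v} [AddCommGroup M] [Module R M]
    (A B : Submodule R M) (hcompl : IsCompl A B)
    (horth : OrthogonalMod R ↥A ↥B) (hsf : SquareFreeMod R ↥B)
    (C : Submodule R M) (f : ↥C →ₗ[R] M) (hf : Function.Injective f) :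
    EssentialIn (Submodule.map f ((C ⊓ B).comap C.subtype) ⊓ (C ⊓ B))
        (Submodule.map f ((C ⊓ B).comap C.subtype)) ∧
      EssentialIn (Submodule.map f ((C ⊓ B).comap C.subtype) ⊓ (C ⊓ B)) (C ⊓ B) := by
  set P := (C ⊓ B).comap C.subtype
  have hP : P.map C.subtype = C ⊓ B := by rw [Submodule.map_comap_subtype, inf_left_idem]
  have key : ∀ N ≤ P, Disjoint (N.map f) (N.map C.subtype) → N = ⊥ := fun N hN hdisj =>
    eq_bot_of_disjoint_map_map hcompl horth hsf f C.subtype hf C.injective_subtype N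
      ((Submodule.map_mono hN).trans (hP.trans_le inf_le_right)) hdisj
  rw [← hP]
  exact ⟨essentialIn_map_inf_map f C.subtype P key,
    inf_comm (P.map f) _ ▸ essentialIn_map_inf_map C.subtype f P fun N hN hdisj =>
      key N hN hdisj.symm⟩
end
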